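/- Consider the change of variables x_i = 1/(1+u_i), c_i = α u_{i+1}/((1+u_i)(1+u_{i+1})). Define the continuant sequence D_{i,j}(α⁻¹c) by the recurrence D = D' - α⁻¹ c_j D''. Then D_{i,j}(α⁻¹c) = (1 + u_i + u_i u_{i+1} + ⋯ + u_i u_{i+1} ⋯ u_{j+1}) / ((1+u_i)(1+u_{i+1}) ⋯ (1+u_{j+1})). -/

import Mathlib

/-- The scaled continuant `D_{i,j}(λc)`, encoded by length:
`D lam c i ℓ` corresponds to `D_{i,j}(λc)` with `ℓ = j - i + 3`; it satisfies
`D_{i,i-2} = D_{i,i-1} = 1` and `D_{i,j} = D_{i,j-1} - λ c_j D_{i,j-2}`. -/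
noncomputable def D (lam : ℂ) (c : ℤ → ℂ) (i : ℤ) : ℕ → ℂ
  | 0 => 0
  | 1 => 1
  | 2 => 1
  | (m + 3) => D lam c i (m + 2) - lam * c (i + m) * D lam c i (m + 1)

/-!
Write `N_n = ∑_{t<n} u_i ⋯ u_{i+t-1}` and `P_n = ∏_{s<n} (1 + u_{i+s})`. Consecutive differences
of `N` are the partial products, so `N_{m+3} = (1 + u_{i+m+1}) N_{m+2} - u_{i+m+1} N_{m+1}`.
Dividing by `P_{m+2}` and using `α⁻¹ c_{i+m} = u_{i+m+1} / ((1 + u_{i+m})(1 + u_{i+m+1}))`, this is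
the continuant recurrence for `N_{n} / P_{n-1}`, which also has the right initial values.
-/

open Finset

theorem D_eq_of_recurrence (lam : ℂ) (c : ℤ → ℂ) (i : ℤ) (f : ℕ → ℂ) (h1 : f 1 = 1)
    (h2 : f 2 = 1) (hrec : ∀ m : ℕ, f (m + 3) = f (m + 2) - lam * c (i + m) * f (m + 1)) :
    ∀ n : ℕ, D lam c i (n + 1) = f (n + 1) := by
  suffices h : ∀ n : ℕ, D lam c i (n + 1) = f (n + 1) ∧ D lam c i (n + 2) = f (n + 2) from
    fun n => (h n).1
  intro n
  induction n with
  | zero => exact ⟨h1.symm, h2.symm⟩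
  | succ m ih =>
    refine ⟨ih.2, ?_⟩
    rw [hrec, ← ih.1, ← ih.2]
    rfl

section PartialProducts

variable {K : Type*}

theorem sum_prod_range_succ_succ_succ [CommRing K] (v : ℕ → K) (m : ℕ) :
    ∑ t ∈ range (m + 3), ∏ s ∈ range t, v s =
      (1 + v (m + 1)) * ∑ t ∈ range (m + 2), ∏ s ∈ range t, v s -
        v (m + 1) * ∑ t ∈ range (m + 1), ∏ s ∈ range t, v s := by
  have hdiff : ∏ s ∈ range (m + 2), v s = v (m + 1) * ∏ s ∈ range (m + 1), v s := by
    rw [prod_range_succ, mul_comm]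
  rw [sum_range_succ _ (m + 2), sum_range_succ _ (m + 1), hdiff]
  ring

theorem sum_prod_div_prod_range_recurrence [Field K] (v : ℕ → K) (hv : ∀ s, 1 + v s ≠ 0)
    (m : ℕ) :
    (∑ t ∈ range (m + 3), ∏ s ∈ range t, v s) / ∏ s ∈ range (m + 2), (1 + v s) =
      (∑ t ∈ range (m + 2), ∏ s ∈ range t, v s) / ∏ s ∈ range (m + 1), (1 + v s) -
        v (m + 1) / ((1 + v m) * (1 + v (m + 1))) *
          ((∑ t ∈ range (m + 1), ∏ s ∈ range t, v s) / ∏ s ∈ range m, (1 + v s)) := by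
  have hP : ∏ s ∈ range m, (1 + v s) ≠ 0 := prod_ne_zero_iff.2 fun s _ => hv s
  have hm := hv m
  have hm' := hv (m + 1)
  rw [sum_prod_range_succ_succ_succ, prod_range_succ _ (m + 1), prod_range_succ _ m]
  field_simp

end PartialProducts

theorem stmt14_general (u : ℤ → ℂ) (hu1 : ∀ i, u i ≠ -1)
    (alpha : ℂ) (halpha : alpha ≠ 0) (c : ℤ → ℂ)
    (hc : ∀ i : ℤ, c i = alpha * u (i + 1) / ((1 + u i) * (1 + u (i + 1)))) :
    ∀ (i : ℤ) (m : ℕ),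
      D alpha⁻¹ c i (m + 2) =
        (∑ t ∈ Finset.range (m + 2), ∏ s ∈ Finset.range t, u (i + s)) /
          ∏ s ∈ Finset.range (m + 1), (1 + u (i + s)) := by
  intro i m
  set v : ℕ → ℂ := fun s => u (i + s)
  have hv : ∀ s, 1 + v s ≠ 0 := fun s h => hu1 (i + s) (by linear_combination h)
  have hcoef : ∀ k : ℕ, alpha⁻¹ * c (i + k) = v (k + 1) / ((1 + v k) * (1 + v (k + 1))) := by
    intro k
    rw [hc, mul_div_assoc, inv_mul_cancel_left₀ halpha]
    simp only [v, Nat.cast_succ, add_assoc]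
  refine D_eq_of_recurrence _ c i
    (fun n => (∑ t ∈ range n, ∏ s ∈ range t, v s) / ∏ s ∈ range (n - 1), (1 + v s))
    (by simp) (by simp [sum_range_succ, hv 0]) (fun m => ?_) (m + 1)
  rw [hcoef]
  exact sum_prod_div_prod_range_recurrence v hv m

/-- With `c_i = α u_{i+1}/((1+u_i)(1+u_{i+1}))`, one has
`D_{i,j}(α⁻¹c) = (1 + u_i + u_i u_{i+1} + ⋯ + u_i ⋯ u_{j+1}) /
((1+u_i)(1+u_{i+1}) ⋯ (1+u_{j+1}))`, for all `j ≥ i - 1`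
(here `j = i + m - 1`, encoded length `m + 2`). -/
theorem stmt14 (u : ℤ → ℂ) (hu0 : ∀ i, u i ≠ 0) (hu1 : ∀ i, u i ≠ -1)
    (alpha : ℂ) (halpha : alpha ≠ 0) (c : ℤ → ℂ)
    (hc : ∀ i : ℤ, c i = alpha * u (i + 1) / ((1 + u i) * (1 + u (i + 1)))) :
    ∀ (i : ℤ) (m : ℕ),
      D alpha⁻¹ c i (m + 2) =
        (∑ t ∈ Finset.range (m + 2), ∏ s ∈ Finset.range t, u (i + s)) /
          ∏ s ∈ Finset.range (m + 1), (1 + u (i + s)) :=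
  stmt14_general u hu1 alpha halpha c hc
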